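/- Let T > 0, y ∈ ℝ, ε ∈ (0,1), and σ > 0 satisfy σ/T ≥ √(ln(2(1 + 1/ε))/π). Then the Gaussian mass of the T-spaced, y-offset one-dimensional lattice satisfies (1 − ε)/T ≤ ∑_{i ∈ ℤ} σ^{−1} exp(−π(Ti + y)²/σ²) ≤ (1 + ε)/T. -/

import Mathlib

/-!
By Poisson summation (the functional equation of Jacobi's theta function), the Gaussian mass of
`ℤ + x` at width `s` equals `s · θ(x, i s²)`, where `θ(z, τ) = ∑ₙ exp(2πinz + πin²τ)`. For real
`x` the non-constant terms of `θ(x, i s²)` have modulus `exp(-πs²n²) ≤ r^|n|` with `r = exp(-πs²)`,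
so `|θ(x, i s²) - 1| ≤ 2r/(1 - r)`, and the smoothing condition `πs² ≥ ln(2(1 + 1/ε))` makes this
at most `ε`. Rescaling by `T` gives the theorem.
-/

open Real Complex

section GeometricTail
variable {E : Type*} [NormedAddCommGroup E] [CompleteSpace E] {r : ℝ}

lemma summable_and_norm_tsum_le_of_norm_le_pow_succ (hr0 : 0 ≤ r) (hr1 : r < 1) {g : ℕ → E}
    (hg : ∀ n, ‖g n‖ ≤ r ^ (n + 1)) : Summable g ∧ ‖∑' n, g n‖ ≤ r / (1 - r) := by
  have hgeom : HasSum (fun n : ℕ => r ^ (n + 1)) (r / (1 - r)) := by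
    simpa [pow_succ', div_eq_mul_inv] using (hasSum_geometric_of_lt_one hr0 hr1).mul_left r
  have hnorm : Summable fun n => ‖g n‖ :=
    .of_nonneg_of_le (fun _ => norm_nonneg _) hg hgeom.summable
  exact ⟨hnorm.of_norm, (norm_tsum_le_tsum_norm hnorm).trans
    ((hnorm.tsum_mono hgeom.summable hg).trans_eq hgeom.tsum_eq)⟩

lemma norm_tsum_int_sub_zero_le (hr0 : 0 ≤ r) (hr1 : r < 1) {f : ℤ → E}
    (hf : ∀ n, ‖f n‖ ≤ r ^ n.natAbs) : ‖∑' n, f n - f 0‖ ≤ 2 * r / (1 - r) := by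
  obtain ⟨hpos, hpos_le⟩ := summable_and_norm_tsum_le_of_norm_le_pow_succ hr0 hr1
    (g := fun n : ℕ => f (n + 1)) fun n => by
      have := hf (n + 1 : ℕ); rwa [Int.natAbs_natCast, Nat.cast_succ] at this
  obtain ⟨hneg, hneg_le⟩ := summable_and_norm_tsum_le_of_norm_le_pow_succ hr0 hr1
    (g := fun n : ℕ => f (-(n + 1))) fun n => by
      have := hf (-(n + 1 : ℕ)); rwa [Int.natAbs_neg, Int.natAbs_natCast, Nat.cast_succ] at this
  have hnat : Summable fun n : ℕ => f n := (summable_nat_add_iff 1).mp (by exact_mod_cast hpos)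
  rw [tsum_of_nat_of_neg_add_one hnat hneg, hnat.tsum_eq_zero_add]
  calc ‖f 0 + ∑' n : ℕ, f (n + 1) + ∑' n : ℕ, f (-(n + 1)) - f 0‖
      = ‖∑' n : ℕ, f (n + 1) + ∑' n : ℕ, f (-(n + 1))‖ := by congr 1; abel
    _ ≤ r / (1 - r) + r / (1 - r) := (norm_add_le _ _).trans (add_le_add hpos_le hneg_le)
    _ = 2 * r / (1 - r) := by ring

end GeometricTail

lemma norm_jacobiTheta₂_ofReal_sub_one_le (x : ℝ) {τ : ℂ} (hτ : 0 < τ.im) :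
    ‖jacobiTheta₂ x τ - 1‖ ≤ 2 * rexp (-π * τ.im) / (1 - rexp (-π * τ.im)) := by
  have hterm (n : ℤ) : ‖jacobiTheta₂_term n x τ‖ ≤ rexp (-π * τ.im) ^ n.natAbs := by
    have hx : ‖jacobiTheta₂_term n x τ‖ = ‖jacobiTheta₂_term n 0 τ‖ := by
      simp only [norm_jacobiTheta₂_term, ofReal_im, zero_im]
    have h0 : jacobiTheta₂_term n 0 τ = cexp (π * I * n ^ 2 * τ) := by
      rw [jacobiTheta₂_term]; ring_nf
    exact hx ▸ h0 ▸ norm_exp_mul_sq_le hτ n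
  have hzero : jacobiTheta₂_term 0 x τ = 1 := by simp [jacobiTheta₂_term]
  simpa only [hzero, jacobiTheta₂] using norm_tsum_int_sub_zero_le (exp_pos _).le
    (exp_lt_one_iff.mpr (by nlinarith [pi_pos])) hterm

lemma ofReal_tsum_exp_neg_pi_add_sq_div_sq {s : ℝ} (hs : 0 < s) (x : ℝ) :
    ((∑' n : ℤ, rexp (-π * (n + x) ^ 2 / s ^ 2) : ℝ) : ℂ) = s * jacobiTheta₂ x (I * s ^ 2) := by
  have hsqrt : (-I * (I * (s : ℂ) ^ 2)) ^ (1 / 2 : ℂ) = s := by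
    rw [← mul_assoc, neg_mul, I_mul_I, neg_neg, one_mul, one_div,
      sq_cpow_two_inv (by simpa using hs)]
  have hs' : (s : ℂ) ≠ 0 := by exact_mod_cast hs.ne'
  -- The functional equation at `-x` (rather than `x`) produces the terms `exp(-π(n + x)²/s²)`.
  rw [← jacobiTheta₂_neg_left, jacobiTheta₂_functional_equation, hsqrt, jacobiTheta₂,
    ← tsum_mul_left, ← tsum_mul_left, ofReal_tsum]
  refine tsum_congr fun n => ?_
  rw [jacobiTheta₂_term, ← mul_assoc, ← mul_assoc, mul_one_div_cancel hs', one_mul,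
    ← Complex.exp_add, ofReal_exp]
  congr 1
  push_cast
  field_simp
  ring

lemma tsum_gaussian_spaced_offset_eq {T σ : ℝ} (hT : 0 < T) (hσ : 0 < σ) (y : ℝ) :
    ∑' i : ℤ, σ⁻¹ * rexp (-π * (T * i + y) ^ 2 / σ ^ 2) =
      (jacobiTheta₂ (y / T : ℝ) (I * (σ / T : ℝ) ^ 2)).re / T := by
  have hpoisson := congrArg re (ofReal_tsum_exp_neg_pi_add_sq_div_sq (div_pos hσ hT) (y / T))
  rw [ofReal_re, re_ofReal_mul] at hpoisson
  have hterm (i : ℤ) : rexp (-π * (T * i + y) ^ 2 / σ ^ 2) =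
      rexp (-π * (i + y / T) ^ 2 / (σ / T) ^ 2) := by
    congr 1; field_simp
  simp_rw [tsum_mul_left, hterm, hpoisson]
  field_simp

lemma two_mul_exp_neg_div_one_sub_le {ε t : ℝ} (hε : 0 < ε)
    (ht : Real.log (2 * (1 + 1 / ε)) ≤ t) :
    2 * rexp (-t) / (1 - rexp (-t)) ≤ ε := by
  have hr : rexp (-t) * (2 * (1 + 1 / ε)) ≤ 1 := by
    rw [← exp_log (by positivity : 0 < 2 * (1 + 1 / ε)), ← Real.exp_add]
    exact exp_le_one_iff.mpr (by linarith)
  have hr' : rexp (-t) * (2 * ε + 2) ≤ ε := by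
    field_simp at hr; linarith
  have hpos := exp_pos (-t)
  rw [div_le_iff₀ (by nlinarith)]
  nlinarith

/-- Let `T > 0`, `y ∈ ℝ`, `ε ∈ (0,1)`, and `σ > 0` satisfy
`σ/T ≥ √(ln(2(1 + 1/ε))/π)`. Then the Gaussian mass of the `T`-spaced, `y`-offset
one-dimensional lattice satisfies
`(1 − ε)/T ≤ ∑_{i ∈ ℤ} σ⁻¹ exp(−π(Ti + y)²/σ²) ≤ (1 + ε)/T`. -/
theorem gaussian_mass_spaced_offset_lattice (T y ε σ : ℝ) (hT : 0 < T)
    (hε : ε ∈ Set.Ioo (0:ℝ) 1) (hσ : 0 < σ)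
    (h : σ / T ≥ Real.sqrt (Real.log (2 * (1 + 1 / ε)) / Real.pi)) :
    (1 - ε) / T ≤ (∑' i : ℤ, σ⁻¹ * Real.exp (-Real.pi * (T * i + y) ^ 2 / σ ^ 2)) ∧
      (∑' i : ℤ, σ⁻¹ * Real.exp (-Real.pi * (T * i + y) ^ 2 / σ ^ 2)) ≤ (1 + ε) / T := by
  set s := σ / T
  have hlog : Real.log (2 * (1 + 1 / ε)) ≤ π * s ^ 2 := by
    rw [mul_comm π]
    exact (div_le_iff₀ pi_pos).mp (sqrt_le_iff.mp h).2
  have hθ : ‖jacobiTheta₂ (y / T : ℝ) (I * s ^ 2) - 1‖ ≤ ε := by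
    have him : (I * (s : ℂ) ^ 2).im = s ^ 2 := by simp [← ofReal_pow]
    have := norm_jacobiTheta₂_ofReal_sub_one_le (y / T) (τ := I * s ^ 2) (him ▸ by positivity)
    rw [him, neg_mul] at this
    exact this.trans (two_mul_exp_neg_div_one_sub_le hε.1 hlog)
  have hre := abs_le.mp ((abs_re_le_norm _).trans hθ)
  rw [sub_re, one_re] at hre
  rw [tsum_gaussian_spaced_offset_eq hT hσ y]
  constructor <;> gcongr <;> linarith
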